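/- Let 0<r<1, R⁺ = {z∈ℂ : r<|z|<1, Im z>0}, and k∈ℕ with k≥1. There exists a constant C (depending only on k) such that for all z₁,z₂,ζ∈R⁺ with ζ≠z₁ and ζ≠z₂, and all integers j with 0≤j≤k−1: |(ζ−z₁+conj(ζ−z₁))^{k−j−1}/(ζ−z₁)^{k−j} − (ζ−z₂+conj(ζ−z₂))^{k−j−1}/(ζ−z₂)^{k−j}| ≤ C·|z₁−z₂|/(|ζ−z₁|·|ζ−z₂|). -/

import Mathlib

open Complex MeasureTheory Real Filter

noncomputable section

/-- Argument normalized to `[0, 2π)`. -/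
def argS (z : ℂ) : ℝ := if 0 ≤ z.arg then z.arg else z.arg + 2 * π

/-- `z ^ β` with the argument of `z` taken in `[0, 2π)`. -/
def powA (β : ℝ) (z : ℂ) : ℂ :=
  Complex.exp ((β : ℂ) * ((Real.log (‖z‖) : ℂ) + Complex.I * (argS z : ℂ)))

/-- The open sector ring `Ω = {r < |z| < 1, 0 < arg z < π/α}`. -/
def Omega (r α : ℝ) : Set ℂ :=
  {z : ℂ | r < ‖z‖ ∧ ‖z‖ < 1 ∧ 0 < argS z ∧ argS z < π / α}

/-- The outer circular arc `Γ₁`. -/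
def Gamma1Set (α : ℝ) : Set ℂ :=
  (fun τ : ℝ => Complex.exp (Complex.I * τ)) '' Set.Icc 0 (π / α)

/-- The inner circular arc `Γ₂`. -/
def Gamma2Set (r α : ℝ) : Set ℂ :=
  (fun τ : ℝ => (r : ℂ) * Complex.exp (Complex.I * τ)) '' Set.Icc 0 (π / α)

/-- The boundary `∂Ω = [r,1] ∪ Γ₁ ∪ [ϖ,ω] ∪ Γ₂` of the sector ring. -/
def bdryOmega (r α : ℝ) : Set ℂ :=
  ((fun t : ℝ => (t : ℂ)) '' Set.Icc r 1) ∪ Gamma1Set α ∪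
    ((fun t : ℝ => (t : ℂ) * Complex.exp (Complex.I * (π / α))) '' Set.Icc r 1) ∪
    Gamma2Set r α

/-- `r^{2αn}` for `n ≥ 1` (here indexed from `0`). -/
def rp (r α : ℝ) (n : ℕ) : ℂ := ((r ^ (2 * α * ((n : ℝ) + 1)) : ℝ) : ℂ)

/-- The kernel `H₁`. -/
def H1 (r α : ℝ) (z ζ : ℂ) : ℂ :=
  (ζ + z) / (ζ - z) - ((starRingEnd ℂ) ζ + z) / ((starRingEnd ℂ) ζ - z) +
    2 * ∑' n : ℕ, rp r α n *
      (ζ / (rp r α n * ζ - z) - z / (rp r α n * z - ζ)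
        - (starRingEnd ℂ) ζ / (rp r α n * (starRingEnd ℂ) ζ - z)
        + z / (rp r α n * z - (starRingEnd ℂ) ζ))

/-- The kernel `H₂`. -/
def H2 (r α : ℝ) (z ζ : ℂ) : ℂ :=
  1 / (ζ - z) - z / (1 - z * ζ) +
    ∑' n : ℕ, rp r α n *
      (1 / (rp r α n * ζ - z) - z / (ζ * (rp r α n * z - ζ))
        - 1 / (ζ * (rp r α n - z * ζ)) + z / (rp r α n * z * ζ - 1))

/-- The Wirtinger derivative `∂/∂z̄ = ½(∂ₓ + i∂_y)`. -/
def dbar (w : ℂ → ℂ) : ℂ → ℂ := fun z =>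
  (1 / 2 : ℂ) * (fderiv ℝ w z 1 + Complex.I * fderiv ℝ w z Complex.I)

/-- The Wirtinger derivative `∂/∂z = ½(∂ₓ - i∂_y)`. -/
def dz (w : ℂ → ℂ) : ℂ → ℂ := fun z =>
  (1 / 2 : ℂ) * (fderiv ℝ w z 1 - Complex.I * fderiv ℝ w z Complex.I)

/-- `∂_{z̄}ⁿ w = f` on `Ω` in the distributional sense. -/
def DistribDbarPow (Ω : Set ℂ) (n : ℕ) (w f : ℂ → ℂ) : Prop :=
  ∀ φ : ℂ → ℂ, ContDiff ℝ (⊤ : ℕ∞) φ → HasCompactSupport φ → tsupport φ ⊆ Ω →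
    ∫ z in Ω, w z * (dbar^[n] φ) z = (-1 : ℂ) ^ n * ∫ z in Ω, f z * φ z

/-- Contour integral `∫_{Γ₁} F(ζ) dζ` (counter-clockwise). -/
def intGamma1 (α : ℝ) (F : ℂ → ℂ) : ℂ :=
  ∫ s in (0:ℝ)..(π / α),
    F (Complex.exp (Complex.I * s)) * (Complex.I * Complex.exp (Complex.I * s))

/-- Contour integral `∫_{Γ₂} F(ζ) dζ` (clockwise). -/
def intGamma2cw (r α : ℝ) (F : ℂ → ℂ) : ℂ :=
  - ∫ s in (0:ℝ)..(π / α),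
      F ((r : ℂ) * Complex.exp (Complex.I * s)) *
        ((r : ℂ) * Complex.I * Complex.exp (Complex.I * s))

/-- Contour integral `∫_{[r,1]} F(ζ) dζ`. -/
def intSegR (r : ℝ) (F : ℂ → ℂ) : ℂ := ∫ t in r..(1:ℝ), F (t : ℂ)

/-- Contour integral `∫_{[ϖ,ω]} F(ζ) dζ` (from `ϖ = e^{iπ/α}` to `ω = re^{iπ/α}`). -/
def intSegT (r α : ℝ) (F : ℂ → ℂ) : ℂ :=
  ∫ t in (1:ℝ)..r,
    F ((t : ℂ) * Complex.exp (Complex.I * (π / α))) * Complex.exp (Complex.I * (π / α))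

/-- Contour integral `∮_{∂Ω} F(ζ) dζ` (counter-clockwise). -/
def bdryInt (r α : ℝ) (F : ℂ → ℂ) : ℂ :=
  intSegR r F + intGamma1 α F + intSegT r α F + intGamma2cw r α F

/-- The open upper half ring `R⁺`. -/
def Rplus (r : ℝ) : Set ℂ := {z : ℂ | r < ‖z‖ ∧ ‖z‖ < 1 ∧ 0 < z.im}

lemma pow_sub_pow_est (x y : ℂ) (M : ℝ) (n : ℕ) (hx : ‖x‖ ≤ M)
    (hy : ‖y‖ ≤ M) :
    ‖x ^ (n + 1) - y ^ (n + 1)‖ ≤ ((n : ℝ) + 1) * M ^ n * ‖x - y‖ := by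
  have hM : 0 ≤ M := le_trans (norm_nonneg x) hx
  induction n with
  | zero => simp
  | succ n ih =>
    have key : x ^ (n + 2) - y ^ (n + 2)
        = x ^ (n + 1) * (x - y) + (x ^ (n + 1) - y ^ (n + 1)) * y := by ring
    calc ‖x ^ (n + 2) - y ^ (n + 2)‖
        ≤ ‖x ^ (n + 1) * (x - y)‖
            + ‖(x ^ (n + 1) - y ^ (n + 1)) * y‖ := by
          rw [key]; exact norm_add_le _ _
      _ = ‖x‖ ^ (n + 1) * ‖x - y‖
            + ‖x ^ (n + 1) - y ^ (n + 1)‖ * ‖y‖ := by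
          rw [norm_mul, norm_mul, norm_pow]
      _ ≤ M ^ (n + 1) * ‖x - y‖
            + (((n : ℝ) + 1) * M ^ n * ‖x - y‖) * M := by
          gcongr
      _ = (((n + 1 : ℕ) : ℝ) + 1) * M ^ (n + 1) * ‖x - y‖ := by push_cast; ring
  
lemma abs_add_conj_le (w : ℂ) : ‖w + (starRingEnd ℂ) w‖ ≤ 2 * ‖w‖ := by
  have h : w + (starRingEnd ℂ) w = ((2 * w.re : ℝ) : ℂ) := by
    rw [Complex.add_conj]
  rw [h, Complex.norm_real, Real.norm_eq_abs, abs_mul, _root_.abs_two]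
  have := Complex.abs_re_le_norm w
  nlinarith [abs_nonneg w.re]

set_option maxHeartbeats 1000000 in
lemma key_est (m : ℕ) (w₁ w₂ : ℂ) (h1 : w₁ ≠ 0) (h2 : w₂ ≠ 0) :
    ‖(w₁ + (starRingEnd ℂ) w₁) ^ m / w₁ ^ (m + 1)
        - (w₂ + (starRingEnd ℂ) w₂) ^ m / w₂ ^ (m + 1)‖
      ≤ ((2 * (m : ℝ) + 1) * 4 ^ m + 2 ^ (m + 2)) * ‖w₁ - w₂‖
          / (‖w₁‖ * ‖w₂‖) := by
  set A := w₁ + (starRingEnd ℂ) w₁ with hA_def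
  set B := w₂ + (starRingEnd ℂ) w₂ with hB_def
  set a := ‖w₁‖ with ha_def
  set b := ‖w₂‖ with hb_def
  set d := ‖w₁ - w₂‖ with hd_def
  set C : ℝ := (2 * (m : ℝ) + 1) * 4 ^ m + 2 ^ (m + 2) with hC_def
  have ha : 0 < a := norm_pos_iff.mpr h1
  have hb : 0 < b := norm_pos_iff.mpr h2
  have hd : 0 ≤ d := norm_nonneg _
  have hCpos : (0 : ℝ) < C := by positivity
  set M : ℝ := max a b with hM_def
  have hMa : a ≤ M := le_max_left _ _
  have hMb : b ≤ M := le_max_right _ _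
  have hM0 : 0 < M := lt_of_lt_of_le ha hMa
  -- rewrite as a single fraction
  have hfrac : A ^ m / w₁ ^ (m + 1) - B ^ m / w₂ ^ (m + 1)
      = (A ^ m * w₂ ^ (m + 1) - w₁ ^ (m + 1) * B ^ m) / (w₁ ^ (m + 1) * w₂ ^ (m + 1)) :=
    div_sub_div _ _ (pow_ne_zero _ h1) (pow_ne_zero _ h2)
  set N := ‖A ^ m * w₂ ^ (m + 1) - w₁ ^ (m + 1) * B ^ m‖ with hN_def
  have habs : ‖A ^ m / w₁ ^ (m + 1) - B ^ m / w₂ ^ (m + 1)‖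
      = N / (a ^ (m + 1) * b ^ (m + 1)) := by
    rw [hfrac, norm_div, norm_mul, norm_pow, norm_pow]
  -- main numerator estimate
  have hN : N ≤ C * d * (a ^ m * b ^ m) := by
    rcases Nat.eq_zero_or_pos m with hm | hm
    · subst hm
      have : N = ‖w₂ - w₁‖ := by simp [hN_def]
      rw [this, ← neg_sub w₁ w₂, norm_neg]
      simp only [pow_zero, mul_one]
      have hC1 : (1 : ℝ) ≤ C := by rw [hC_def]; norm_num
      nlinarith
    obtain ⟨m', rfl⟩ : ∃ m', m = m' + 1 := ⟨m - 1, by omega⟩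
    rcases le_or_gt M (2 * d) with hcase | hcase
    · -- far apart: use triangle inequality
      have h1' : ‖A ^ (m' + 1) * w₂ ^ (m' + 2)‖ ≤ (2 * a) ^ (m' + 1) * b ^ (m' + 2) := by
        rw [norm_mul, norm_pow, norm_pow]
        gcongr
        exact abs_add_conj_le w₁
      have h2' : ‖w₁ ^ (m' + 2) * B ^ (m' + 1)‖ ≤ a ^ (m' + 2) * (2 * b) ^ (m' + 1) := by
        rw [norm_mul, norm_pow, norm_pow]
        gcongr
        exact abs_add_conj_le w₂
      have htri : N ≤ (2 * a) ^ (m' + 1) * b ^ (m' + 2) + a ^ (m' + 2) * (2 * b) ^ (m' + 1) :=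
        le_trans (norm_sub_le _ _) (add_le_add h1' h2')
      have hab2M : a + b ≤ 2 * M := by
        have := le_max_left a b; have := le_max_right a b; nlinarith
      calc N ≤ (2 * a) ^ (m' + 1) * b ^ (m' + 2) + a ^ (m' + 2) * (2 * b) ^ (m' + 1) := htri
        _ = 2 ^ (m' + 1) * (a + b) * (a ^ (m' + 1) * b ^ (m' + 1)) := by ring
        _ ≤ 2 ^ (m' + 1) * (2 * (2 * d)) * (a ^ (m' + 1) * b ^ (m' + 1)) := by
            gcongr
            nlinarith
        _ = 2 ^ (m' + 1 + 2) * d * (a ^ (m' + 1) * b ^ (m' + 1)) := by ring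
        _ ≤ C * d * (a ^ (m' + 1) * b ^ (m' + 1)) := by
            gcongr
            · rw [hC_def]
              have h1 : (0 : ℝ) ≤ (2 * ((m' : ℝ) + 1) + 1) * 4 ^ (m' + 1) := by positivity
              push_cast
              linarith
    · -- close together: comparable moduli
      have hd_ab : |a - b| ≤ d := by
        have h1'' : a ≤ d + b := by
          calc a = ‖(w₁ - w₂) + w₂‖ := by ring_nf; exact ha_def
            _ ≤ d + b := norm_add_le _ _
        have h2'' : b ≤ d + a := by
          have heq : ‖w₂ - w₁‖ = d := by rw [← neg_sub w₁ w₂, norm_neg]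
          calc b = ‖(w₂ - w₁) + w₁‖ := by ring_nf; exact hb_def
            _ ≤ ‖w₂ - w₁‖ + a := norm_add_le _ _
            _ = d + a := by rw [heq]
        rw [abs_le]; constructor <;> linarith
      have hM2a : M ≤ 2 * a := by
        rcases max_cases a b with ⟨he, _⟩ | ⟨he, _⟩
        · rw [hM_def, he]; linarith
        · rw [hM_def, he]
          have := abs_le.mp hd_ab
          have : b ≤ a + d := by linarith [this.2]
          rw [hM_def, he] at hcase
          linarith
      have hM2b : M ≤ 2 * b := by
        rcases max_cases a b with ⟨he, _⟩ | ⟨he, _⟩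
        · rw [hM_def, he]
          have := abs_le.mp hd_ab
          have : a ≤ b + d := by linarith [this.1]
          rw [hM_def, he] at hcase
          linarith
        · rw [hM_def, he]; linarith
      have hM2 : M ^ 2 ≤ 2 * (a * b) := by
        rcases max_choice a b with he | he
        · rw [hM_def, he]; nlinarith
        · rw [hM_def, he]; nlinarith
      have hpowM : M ^ (2 * (m' + 1)) ≤ 2 ^ (m' + 1) * (a ^ (m' + 1) * b ^ (m' + 1)) := by
        calc M ^ (2 * (m' + 1)) = (M ^ 2) ^ (m' + 1) := by rw [← pow_mul]
          _ ≤ (2 * (a * b)) ^ (m' + 1) := by gcongr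
          _ = 2 ^ (m' + 1) * (a ^ (m' + 1) * b ^ (m' + 1)) := by rw [mul_pow, mul_pow]
      -- bounds on pieces
      have hAle : ‖A‖ ≤ 2 * M :=
        le_trans (abs_add_conj_le w₁) (by linarith)
      have hBle : ‖B‖ ≤ 2 * M :=
        le_trans (abs_add_conj_le w₂) (by linarith)
      have hABd : ‖A - B‖ ≤ 2 * d := by
        have heq : A - B = (w₁ - w₂) + (starRingEnd ℂ) (w₁ - w₂) := by
          rw [hA_def, hB_def, map_sub]; ring
        rw [heq]
        calc ‖(w₁ - w₂) + (starRingEnd ℂ) (w₁ - w₂)‖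
            ≤ ‖w₁ - w₂‖ + ‖(starRingEnd ℂ) (w₁ - w₂)‖ :=
              norm_add_le _ _
          _ = 2 * d := by rw [Complex.norm_conj]; ring
      have hpp1 : ‖A ^ (m' + 1) - B ^ (m' + 1)‖
          ≤ ((m' : ℝ) + 1) * (2 * M) ^ m' * (2 * d) := by
        calc ‖A ^ (m' + 1) - B ^ (m' + 1)‖
            ≤ ((m' : ℝ) + 1) * (2 * M) ^ m' * ‖A - B‖ :=
              pow_sub_pow_est A B (2 * M) m' hAle hBle
          _ ≤ ((m' : ℝ) + 1) * (2 * M) ^ m' * (2 * d) := by gcongr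
      have hpp2 : ‖w₂ ^ (m' + 2) - w₁ ^ (m' + 2)‖
          ≤ ((m' : ℝ) + 2) * M ^ (m' + 1) * d := by
        have hsub : ‖w₂ - w₁‖ = d := by rw [← neg_sub w₁ w₂, norm_neg]
        have := pow_sub_pow_est w₂ w₁ M (m' + 1) hMb hMa
        rw [hsub] at this
        refine le_trans this (le_of_eq ?_)
        push_cast; ring
      have hdecomp : A ^ (m' + 1) * w₂ ^ (m' + 2) - w₁ ^ (m' + 2) * B ^ (m' + 1)
          = (A ^ (m' + 1) - B ^ (m' + 1)) * w₂ ^ (m' + 2)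
            + B ^ (m' + 1) * (w₂ ^ (m' + 2) - w₁ ^ (m' + 2)) := by ring
      calc N = ‖(A ^ (m' + 1) - B ^ (m' + 1)) * w₂ ^ (m' + 2)
              + B ^ (m' + 1) * (w₂ ^ (m' + 2) - w₁ ^ (m' + 2))‖ := by
            rw [hN_def, hdecomp]
        _ ≤ ‖A ^ (m' + 1) - B ^ (m' + 1)‖ * b ^ (m' + 2)
              + (‖B‖) ^ (m' + 1) * ‖w₂ ^ (m' + 2) - w₁ ^ (m' + 2)‖ := by
            refine le_trans (norm_add_le _ _) ?_
            rw [norm_mul, norm_mul, norm_pow, norm_pow]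
        _ ≤ (((m' : ℝ) + 1) * (2 * M) ^ m' * (2 * d)) * M ^ (m' + 2)
              + (2 * M) ^ (m' + 1) * (((m' : ℝ) + 2) * M ^ (m' + 1) * d) := by
            refine add_le_add
              (mul_le_mul hpp1 (pow_le_pow_left₀ hb.le hMb _) (by positivity) (by positivity))
              (mul_le_mul (pow_le_pow_left₀ (norm_nonneg _) hBle _) hpp2
                (norm_nonneg _) (by positivity))
        _ = (2 * ((m' : ℝ) + 1) + ((m' : ℝ) + 2) * 2) * 2 ^ m' * M ^ (2 * (m' + 1)) * d := by
            ring
        _ ≤ (2 * ((m' : ℝ) + 1) + ((m' : ℝ) + 2) * 2) * 2 ^ m'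
              * (2 ^ (m' + 1) * (a ^ (m' + 1) * b ^ (m' + 1))) * d := by
            gcongr
        _ ≤ C * d * (a ^ (m' + 1) * b ^ (m' + 1)) := by
            rw [hC_def]
            have habm : (0 : ℝ) ≤ a ^ (m' + 1) * b ^ (m' + 1) := by positivity
            have h5 : (2 : ℝ) ^ (m' + 1) = 2 * 2 ^ m' := by ring
            have h6 : (2 : ℝ) ^ (m' + 1 + 2) = 8 * 2 ^ m' := by ring
            have h4 : (4 : ℝ) ^ (m' + 1) = (2 * 2 ^ m') * (2 * 2 ^ m') := by
              rw [← h5, ← mul_pow]; norm_num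
            push_cast
            rw [h4, h5, h6]
            nlinarith [mul_nonneg (mul_nonneg hd habm)
              (pow_nonneg (by norm_num : (0:ℝ) ≤ 2) m')]
  -- conclude
  rw [habs]
  calc N / (a ^ (m + 1) * b ^ (m + 1)) ≤ (C * d * (a ^ m * b ^ m)) / (a ^ (m + 1) * b ^ (m + 1)) := by
        gcongr
      _ = C * d / (a * b) := by
        rw [pow_succ, pow_succ]
        field_simp

/-- **A difference estimate for the kernel with denominator `(ζ−z)^{k−j}`**
(used in the proof of Lemma 4.2). -/
theorem kernel_difference_estimate_two
    (r : ℝ) (hr0 : 0 < r) (hr1 : r < 1) (k : ℕ) (hk : 1 ≤ k) :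
    ∃ C : ℝ, 0 < C ∧
      ∀ z₁ ∈ Rplus r, ∀ z₂ ∈ Rplus r, ∀ ζ ∈ Rplus r, ζ ≠ z₁ → ζ ≠ z₂ → ∀ j < k,
        ‖(ζ - z₁ + (starRingEnd ℂ) (ζ - z₁)) ^ (k - j - 1) / (ζ - z₁) ^ (k - j)
              - (ζ - z₂ + (starRingEnd ℂ) (ζ - z₂)) ^ (k - j - 1) / (ζ - z₂) ^ (k - j)‖ ≤
          C * ‖z₁ - z₂‖ / (‖ζ - z₁‖ * ‖ζ - z₂‖) := by
  refine ⟨(2 * (k : ℝ) + 1) * 4 ^ k + 2 ^ (k + 2), by positivity, ?_⟩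
  intro z₁ _ z₂ _ ζ _ hζ1 hζ2 j hj
  set m : ℕ := k - j - 1 with hm_def
  have hkj : k - j = m + 1 := by omega
  have hw1 : ζ - z₁ ≠ 0 := sub_ne_zero_of_ne hζ1
  have hw2 : ζ - z₂ ≠ 0 := sub_ne_zero_of_ne hζ2
  have hdiff : ‖(ζ - z₁) - (ζ - z₂)‖ = ‖z₁ - z₂‖ := by
    rw [show (ζ - z₁) - (ζ - z₂) = -(z₁ - z₂) by ring, norm_neg]
  have key := key_est m (ζ - z₁) (ζ - z₂) hw1 hw2
  rw [hdiff] at key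
  rw [hkj]
  refine le_trans key ?_
  have hmk : m ≤ k := by omega
  have hCle : ((2 * (m : ℝ) + 1) * 4 ^ m + 2 ^ (m + 2))
      ≤ ((2 * (k : ℝ) + 1) * 4 ^ k + 2 ^ (k + 2)) := by
    have h1 : (m : ℝ) ≤ k := Nat.cast_le.mpr hmk
    have h2 : (4 : ℝ) ^ m ≤ 4 ^ k := pow_le_pow_right₀ (by norm_num) hmk
    have h3 : (2 : ℝ) ^ (m + 2) ≤ 2 ^ (k + 2) := pow_le_pow_right₀ (by norm_num) (by omega)
    nlinarith [pow_pos (show (0:ℝ) < 4 by norm_num) m]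
  gcongr <;> first | exact hCle | exact norm_nonneg _ | positivity
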